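/- Let C be a binary self-dual code of length n and x ∈ F_2^n \ C with ⟨x,x⟩ = 0. Then D = ⟨ ⟨x⟩^⊥ ∩ C, x ⟩ (the span of (x^⊥ ∩ C) together with x) is a binary self-dual code of length n. -/
import Mathlib


/-- The dual of a binary code `C ⊆ 𝔽₂ⁿ` with respect to the standard
bilinear form `⟨x, y⟩ = ∑ i, x i * y i`. -/
def dualCode {n : ℕ} (C : Submodule (ZMod 2) (Fin n → ZMod 2)) :
    Submodule (ZMod 2) (Fin n → ZMod 2) where
  carrier := {y | ∀ x ∈ C, ∑ i, x i * y i = 0}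
  zero_mem' := by intro x _; simp
  add_mem' := by
    intro a b ha hb x hx
    simp only [Set.mem_setOf_eq, Pi.add_apply, mul_add, Finset.sum_add_distrib] at *
    rw [ha x hx, hb x hx, add_zero]
  smul_mem' := by
    intro c y hy x hx
    have : ∑ i, x i * (c • y) i = c * ∑ i, x i * y i := by
      rw [Finset.mul_sum]
      exact Finset.sum_congr rfl fun i _ => by simp [smul_eq_mul]; ring
    simp only [Set.mem_setOf_eq] at *
    rw [this, hy x hx, mul_zero]

namespace NeighborAux

variable {n : ℕ}

/-- The standard bilinear form. -/
def B (u v : Fin n → ZMod 2) : ZMod 2 := ∑ i, u i * v i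

lemma B_comm (u v : Fin n → ZMod 2) : B u v = B v u := by
  simp [B, mul_comm]

lemma B_add_left (u v w : Fin n → ZMod 2) : B (u + v) w = B u w + B v w := by
  simp [B, add_mul, Finset.sum_add_distrib]

lemma B_add_right (u v w : Fin n → ZMod 2) : B u (v + w) = B u v + B u w := by
  simp [B, mul_add, Finset.sum_add_distrib]

lemma B_smul_right (a : ZMod 2) (u v : Fin n → ZMod 2) : B u (a • v) = a * B u v := by
  simp only [B, Finset.mul_sum, Pi.smul_apply, smul_eq_mul]
  exact Finset.sum_congr rfl fun i _ => by ring

lemma B_smul_left (a : ZMod 2) (u v : Fin n → ZMod 2) : B (a • u) v = a * B u v := by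
  rw [B_comm, B_smul_right, B_comm]

lemma mem_dual_iff {S : Submodule (ZMod 2) (Fin n → ZMod 2)} {y : Fin n → ZMod 2} :
    y ∈ dualCode S ↔ ∀ z ∈ S, B z y = 0 := Iff.rfl

lemma mem_dual_span_singleton {x y : Fin n → ZMod 2} :
    y ∈ dualCode (Submodule.span (ZMod 2) {x}) ↔ B x y = 0 := by
  constructor
  · intro hy
    exact hy x (Submodule.mem_span_singleton_self x)
  · intro h z hz
    obtain ⟨a, rfl⟩ := Submodule.mem_span_singleton.mp hz
    show B (a • x) y = 0
    rw [B_smul_left, h, mul_zero]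

lemma two_torsion (a : ZMod 2) : a + a = 0 := by fin_cases a <;> decide

lemma nonzero_eq_one {a : ZMod 2} (ha : a ≠ 0) : a = 1 := by
  fin_cases a
  · exact absurd rfl ha
  · rfl

end NeighborAux

open NeighborAux in
/-- if `C` is a binary self-dual code of length `n` and
`x ∉ C` with `⟨x, x⟩ = 0`, then `D = ⟨⟨x⟩^⊥ ∩ C, x⟩` is again self-dual. -/
theorem neighbor_selfDual {n : ℕ} (C : Submodule (ZMod 2) (Fin n → ZMod 2))
    (h : C = dualCode C) (x : Fin n → ZMod 2) (hx : x ∉ C)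
    (hxx : ∑ i, x i * x i = 0) :
    (dualCode (Submodule.span (ZMod 2) {x}) ⊓ C) ⊔ Submodule.span (ZMod 2) {x} =
      dualCode ((dualCode (Submodule.span (ZMod 2) {x}) ⊓ C) ⊔
        Submodule.span (ZMod 2) {x}) := by
  set E : Submodule (ZMod 2) (Fin n → ZMod 2) :=
    dualCode (Submodule.span (ZMod 2) {x}) ⊓ C with hE
  set D : Submodule (ZMod 2) (Fin n → ZMod 2) :=
    E ⊔ Submodule.span (ZMod 2) {x} with hD
  have hBxx : B x x = 0 := hxx
  -- decompose membership in D
  have hmemD : ∀ u ∈ D, ∃ e ∈ E, ∃ a : ZMod 2, u = e + a • x := by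
    intro u hu
    obtain ⟨e, he, z, hz, rfl⟩ := Submodule.mem_sup.mp hu
    obtain ⟨a, rfl⟩ := Submodule.mem_span_singleton.mp hz
    exact ⟨e, he, a, rfl⟩
  have hEx : ∀ e ∈ E, B x e = 0 := fun e he =>
    mem_dual_span_singleton.mp he.1
  -- pairs in D are orthogonal
  have orth : ∀ u ∈ D, ∀ v ∈ D, B u v = 0 := by
    intro u hu v hv
    obtain ⟨e, he, a, rfl⟩ := hmemD u hu
    obtain ⟨f, hf, b, rfl⟩ := hmemD v hv
    have hef : B e f = 0 := by
      have := h ▸ hf.2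
      exact this e he.2
    rw [B_add_left, B_add_right, B_add_right, B_smul_left, B_smul_left,
      B_smul_right, B_smul_right, hef, hBxx, B_comm e x, hEx e he,
      hEx f hf]
    ring
  refine le_antisymm (fun u hu => fun v hv => orth v hv u hu) ?_
  -- find c₀ ∈ C with B c₀ x = 1
  have : ¬ (x ∈ dualCode C) := by rw [← h]; exact hx
  have : ∃ c₀ ∈ C, B c₀ x ≠ 0 := by
    by_contra hc
    push_neg at hc
    exact this fun c hcC => hc c hcC
  obtain ⟨c₀, hc₀C, hc₀x⟩ := this
  have hc₀x1 : B c₀ x = 1 := nonzero_eq_one hc₀x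
  intro y hy
  have hyE : ∀ e ∈ E, B e y = 0 := fun e he =>
    hy e (Submodule.mem_sup_left he)
  have hyx : B x y = 0 :=
    hy x (Submodule.mem_sup_right (Submodule.mem_span_singleton_self x))
  set a : ZMod 2 := B c₀ y with ha
  set y' : Fin n → ZMod 2 := y + a • x with hy'
  -- y' ∈ dualCode C = C
  have hy'C : y' ∈ C := by
    rw [h]
    intro c hcC
    show B c y' = 0
    -- e := c + (B x c) • c₀ ∈ E
    have heE : c + (B x c) • c₀ ∈ E := by
      constructor
      · exact mem_dual_span_singleton.mpr (by
          rw [B_add_right, B_smul_right, B_comm x c₀, hc₀x1, mul_one,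
            two_torsion])
      · exact C.add_mem hcC (C.smul_mem _ hc₀C)
    have h1 : B c y + B x c * a = 0 := by
      have := hyE _ heE
      rwa [B_add_left, B_smul_left] at this
    rw [B_add_right, B_smul_right, B_comm c x]
    have h2 : B c y = B x c * a := by
      rw [← add_zero (B c y), ← two_torsion (B x c * a), ← add_assoc, h1, zero_add]
    rw [h2, mul_comm a (B x c), two_torsion]
  have hy'E : y' ∈ E := by
    refine ⟨mem_dual_span_singleton.mpr ?_, hy'C⟩
    rw [B_add_right, B_smul_right, hyx, hBxx, mul_zero, add_zero]
  -- y = y' + a • x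
  have hyeq : y = y' + a • x := by
    rw [hy']
    funext i
    simp only [Pi.add_apply, Pi.smul_apply, smul_eq_mul]
    rw [add_assoc, two_torsion, add_zero]
  rw [hyeq]
  exact D.add_mem (Submodule.mem_sup_left hy'E)
    (Submodule.mem_sup_right (Submodule.smul_mem _ _
      (Submodule.mem_span_singleton_self x)))
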